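/- (Martinian–Sundberg converse) Let B and T be positive integers and suppose there exist a finite field F, positive integers k ≥ 1 and n, a (k,n) streaming encoder, and a delay-T decoder that together correct every erasure pattern in which, within every window of T+1 consecutive time indices, the erased indices are contained in a single interval of at most B consecutive integers. Then the rate R = k/n satisfies B ≤ T·min(1, (1−R)/R); equivalently, both R·B ≤ (1−R)·T and B ≤ T hold. -/

import Mathlib

/-!
If `B > T`, the initial burst `[0, B)` erases all of `y[0], …, y[T]`, from which `s[0]` must be
recovered; so `B ≤ T`. For the rate, erase the first `B` of every `B + T` symbols. After `m`
periods and the delay `T`, the decoder has recovered `k·m(B+T)` source field elements from at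
most `(m+1)T` unerased channel symbols, i.e. `n(m+1)T` field elements; hence
`k·m(B+T) ≤ n(m+1)T` for every `m`, and letting `m` grow gives `k(B+T) ≤ nT`, which is
`R·B ≤ (1-R)·T`.
-/

open scoped Classical

/-- A `(k,n)` streaming encoder over `F`: at each time `i` it maps the source symbols
`s[0], …, s[i]` to a channel symbol in `Fⁿ`. -/
def Encoder (F : Type) (k n : ℕ) : Type :=
  (i : ℕ) → (Fin (i + 1) → (Fin k → F)) → (Fin n → F)

/-- The channel input `x[i]` produced by the encoder `f` from the source sequence `s`. -/
def chInput {F : Type} {k n : ℕ} (f : Encoder F k n) (s : ℕ → Fin k → F) (i : ℕ) :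
    Fin n → F :=
  f i (fun t => s t)

/-- The channel output under erasure pattern `E`: `none` (the erasure symbol `⋆`) at erased
positions, `some x[i]` otherwise. -/
noncomputable def chOutput {F : Type} {k n : ℕ} (f : Encoder F k n) (E : Set ℕ)
    (s : ℕ → Fin k → F) (i : ℕ) : Option (Fin n → F) :=
  if i ∈ E then none else some (chInput f s i)

/-- A delay-`T` decoder family: at time `i + T` it maps `y[0], …, y[i+T]` to a source symbol. -/
def Decoder (F : Type) (k n T : ℕ) : Type :=
  (i : ℕ) → (Fin (i + T + 1) → Option (Fin n → F)) → (Fin k → F)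

/-- The code `(f, g)` corrects the erasure pattern `E` with delay `T`: for every source
sequence, each `s[i]` is reproduced from `y[0], …, y[i+T]`. -/
def Corrects {F : Type} {k n T : ℕ} (f : Encoder F k n) (g : Decoder F k n T)
    (E : Set ℕ) : Prop :=
  ∀ (s : ℕ → Fin k → F) (i : ℕ), g i (fun t => chOutput f E s t) = s i

/-- The burst-erasure channel: in every window of `T + 1` consecutive indices, the erased
indices are contained in a single interval of at most `B` consecutive integers. -/
def BurstChannel (B T : ℕ) : Set (Set ℕ) :=
  {E | ∀ j : ℕ, ∃ b : ℕ, E ∩ Set.Icc j (j + T) ⊆ Set.Ico b (b + B)}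

section Streaming

variable {F : Type} {k n T : ℕ} {f : Encoder F k n} {g : Decoder F k n T} {E : Set ℕ}

theorem Corrects.eq_of_chInput_eq (h : Corrects f g E) {s s' : ℕ → Fin k → F} {i : ℕ}
    (hx : ∀ t ≤ i + T, t ∉ E → chInput f s t = chInput f s' t) : s i = s' i := by
  rw [← h s i, ← h s' i]
  congr 1
  funext t
  by_cases ht : (t : ℕ) ∈ E
  · simp only [chOutput, ht, if_true]
  · simp only [chOutput, ht, if_false, hx t (by omega) ht]

theorem Corrects.exists_le_notMem [Nontrivial F] (h : Corrects f g E) (hk : 0 < k) (i : ℕ) :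
    ∃ t ≤ i + T, t ∉ E := by
  have : Nonempty (Fin k) := ⟨⟨0, hk⟩⟩
  obtain ⟨a, b, hab⟩ := exists_pair_ne (Fin k → F)
  by_contra! hE
  exact hab (h.eq_of_chInput_eq (s := fun _ => a) (s' := fun _ => b) (i := i)
    fun t ht htE => absurd (hE t ht) htE)

/-- The source prefix `s[0], …, s[N-1]` is a function of the unerased symbols among
`x[0], …, x[N+T-1]`, so there are at most as many prefixes as values of those symbols. -/
theorem Corrects.mul_le_mul_card_unerased [Fintype F] [Nontrivial F] (h : Corrects f g E)
    (N : ℕ) : k * N ≤ n * ((Finset.range (N + T)).filter (· ∉ E)).card := by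
  set S := (Finset.range (N + T)).filter (· ∉ E)
  obtain ⟨s₀⟩ : Nonempty (ℕ → Fin k → F) := inferInstance
  let extend (u : Fin N → Fin k → F) (j : ℕ) : Fin k → F :=
    if hj : j < N then u ⟨j, hj⟩ else s₀ j
  let observe (u : Fin N → Fin k → F) (t : S) : Fin n → F := chInput f (extend u) t
  have hinj : Function.Injective observe := by
    intro u u' huu'
    funext i
    have := h.eq_of_chInput_eq (s := extend u) (s' := extend u') (i := i) fun t ht htE =>
      congrFun huu' ⟨t, Finset.mem_filter.2 ⟨Finset.mem_range.2 (by omega), htE⟩⟩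
    simpa [extend] using this
  have hcard := Fintype.card_le_of_injective observe hinj
  simp only [Fintype.card_fun, Fintype.card_coe, Fintype.card_fin, ← pow_mul] at hcard
  rw [Nat.pow_le_pow_iff_right Fintype.one_lt_card] at hcard
  linarith [hcard]

end Streaming

theorem Ico_mem_burstChannel (B T : ℕ) : Set.Ico 0 B ∈ BurstChannel B T :=
  fun _ => ⟨0, by rw [zero_add]; exact Set.inter_subset_left⟩

def periodicBurst (B T : ℕ) : Set ℕ := {i | i % (B + T) < B}

/-- The `B` erased residues of a period are followed by `T` unerased ones. -/
theorem div_eq_of_mod_lt {B T a b : ℕ} (ha : a % (B + T) < B) (hab : a ≤ b) (hba : b ≤ a + T) :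
    b / (B + T) = a / (B + T) := by
  refine le_antisymm ?_ (Nat.div_le_div_right hab)
  have := Nat.div_add_mod a (B + T)
  exact Nat.lt_succ_iff.1 <| (Nat.div_lt_iff_lt_mul (by omega)).2 <| by
    rw [Nat.succ_mul]; linarith [Nat.mul_comm (B + T) (a / (B + T))]

theorem periodicBurst_mem_burstChannel (B T : ℕ) : periodicBurst B T ∈ BurstChannel B T := by
  intro j
  by_cases hne : (periodicBurst B T ∩ Set.Icc j (j + T)).Nonempty
  · obtain ⟨t₀, ht₀E, ht₀j, ht₀j'⟩ := hne
    refine ⟨t₀ / (B + T) * (B + T), fun t ⟨htE, htj, htj'⟩ => ?_⟩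
    have hdiv : t / (B + T) = t₀ / (B + T) := by
      rcases le_total t t₀ with h | h
      · exact (div_eq_of_mod_lt htE h (by omega)).symm
      · exact div_eq_of_mod_lt ht₀E h (by omega)
    have := Nat.div_add_mod t (B + T)
    have htE' : t % (B + T) < B := htE
    rw [← hdiv, Nat.mul_comm]
    constructor <;> omega
  · exact ⟨0, fun t ht => absurd ⟨t, ht⟩ hne⟩

theorem card_unerased_periodicBurst_le (B T m : ℕ) :
    ((Finset.range (m * (B + T) + T)).filter (· ∉ periodicBurst B T)).card ≤ (m + 1) * T := by
  rcases Nat.eq_zero_or_pos (B + T) with hL | hL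
  · obtain ⟨rfl, rfl⟩ : B = 0 ∧ T = 0 := by omega
    simp
  calc _ ≤ (Finset.range (m + 1) ×ˢ Finset.Ico B (B + T)).card := by
        refine Finset.card_le_card_of_injOn (fun t => (t / (B + T), t % (B + T))) ?_ ?_
        · intro t ht
          simp only [Finset.coe_filter, Finset.mem_range, periodicBurst, Set.mem_ofPred_eq,
            not_lt] at ht
          simp only [Finset.coe_product, Set.mem_prod, Finset.coe_range, Set.mem_Iio,
            Finset.coe_Ico, Set.mem_Ico]
          refine ⟨Nat.div_lt_of_lt_mul ?_, ht.2, Nat.mod_lt t hL⟩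
          nlinarith
        · intro t _ t' _ h
          simp only [Prod.mk.injEq] at h
          rw [← Nat.div_add_mod t (B + T), ← Nat.div_add_mod t' (B + T), h.1, h.2]
    _ = (m + 1) * T := by simp

theorem le_of_forall_mul_le_succ_mul {a b : ℕ} (h : ∀ m, m * a ≤ (m + 1) * b) : a ≤ b := by
  by_contra! hba
  nlinarith [h (b + 1)]

theorem rate_bound_of_mul_le {k n B T : ℕ} (h : k * (B + T) ≤ n * T) :
    ((k : ℝ) / n) * B ≤ (1 - (k : ℝ) / n) * T := by
  rcases Nat.eq_zero_or_pos n with rfl | hn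
  · simp
  · have h' : (k : ℝ) * (B + T) ≤ n * T := by exact_mod_cast h
    rw [one_sub_div (by positivity), div_mul_eq_mul_div, div_mul_eq_mul_div,
      div_le_div_iff_of_pos_right (by positivity)]
    nlinarith

theorem stmt3_general (B T : ℕ)
    (F : Type) [Field F] [Fintype F] (k n : ℕ) (hk : 1 ≤ k)
    (f : Encoder F k n) (g : Decoder F k n T)
    (hcorr : ∀ E ∈ BurstChannel B T, Corrects f g E) :
    ((k : ℝ) / n) * B ≤ (1 - (k : ℝ) / n) * T ∧ B ≤ T := by
  have hBT : B ≤ T := by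
    obtain ⟨t, ht, htB⟩ := (hcorr _ (Ico_mem_burstChannel B T)).exists_le_notMem hk 0
    simp only [Set.mem_Ico, not_and, not_lt] at htB
    omega
  have hrate : k * (B + T) ≤ n * T := le_of_forall_mul_le_succ_mul fun m => by
    have := (hcorr _ (periodicBurst_mem_burstChannel B T)).mul_le_mul_card_unerased (m * (B + T))
    calc m * (k * (B + T)) = k * (m * (B + T)) := by ring
      _ ≤ n * ((m + 1) * T) :=
        this.trans (Nat.mul_le_mul_left n (card_unerased_periodicBurst_le B T m))
      _ = (m + 1) * (n * T) := by ring
  exact ⟨rate_bound_of_mul_le hrate, hBT⟩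

/-- Martinian–Sundberg converse: any rate-`R = k/n` streaming code with delay `T` correcting
every single-burst pattern of burst length at most `B` per window of length `T+1` satisfies
`B ≤ T·min(1, (1−R)/R)`, i.e. both `R·B ≤ (1−R)·T` and `B ≤ T`. -/
theorem stmt3 (B T : ℕ) (hB : 0 < B) (hT : 0 < T)
    (F : Type) [Field F] [Fintype F] (k n : ℕ) (hk : 1 ≤ k) (hn : 0 < n)
    (f : Encoder F k n) (g : Decoder F k n T)
    (hcorr : ∀ E ∈ BurstChannel B T, Corrects f g E) :
    ((k : ℝ) / n) * B ≤ (1 - (k : ℝ) / n) * T ∧ B ≤ T :=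
  stmt3_general B T F k n hk f g hcorr
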